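/- arXiv:2603.08585 — 5 statements merged into one kernel-verified Lean document; each statement's English description precedes it below -/
import Mathlib

section
/- If a finite digraph D = (V,E) is an interval nest digraph, then D is reflexive and there exists a nest ordering on V. -/
/-- A nest representation of a digraph `E`: closed bounded (nonempty) real intervals
`I_u = [aI u, bI u]` and `J_u = [aJ u, bJ u]` with `J_u ⊆ I_u` for every vertex `u`,
such that `u → v` is an arc iff `I_u ∩ J_v ≠ ∅`. -/
def IsNestRepresentation {V : Type*} (E : V → V → Prop)
    (aI bI aJ bJ : V → ℝ) : Prop :=
  (∀ u, aI u ≤ bI u) ∧ (∀ u, aJ u ≤ bJ u) ∧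
  (∀ u, Set.Icc (aJ u) (bJ u) ⊆ Set.Icc (aI u) (bI u)) ∧
  (∀ u v, E u v ↔ (Set.Icc (aI u) (bI u) ∩ Set.Icc (aJ v) (bJ v)).Nonempty)

/-- An interval nest digraph is one admitting a nest representation. -/
def IsIntervalNestDigraph {V : Type*} (E : V → V → Prop) : Prop :=
  ∃ aI bI aJ bJ : V → ℝ, IsNestRepresentation E aI bI aJ bJ

/-- The arc `uv` is symmetric: both `uv` and `vu` are arcs. -/
def SymArc {V : Type*} (E : V → V → Prop) (u v : V) : Prop := E u v ∧ E v u

/-- A nest ordering of a digraph `E`: a linear order `le` on the vertices such that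
for all `u ≤ v ≤ w ≤ z` (repetitions allowed) properties (i), (ii), (iii) hold. -/
def IsNestOrdering {V : Type*} (E : V → V → Prop) (le : V → V → Prop) : Prop :=
  IsLinearOrder V le ∧
  ∀ u v w z : V, le u v → le v w → le w z →
    ((E u w ∧ E u z → E u v ∨ (SymArc E v w ∧ SymArc E v z ∧ SymArc E w z)) ∧
     (E z u ∧ E z v → E z w ∨ (SymArc E w u ∧ SymArc E v u ∧ SymArc E w v)) ∧
     (E u z ∧ E v w → E u w ∨ E v z) ∧
     (E z u ∧ E w v → E z v ∨ E w u) ∧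
     (E u w ∧ E v z → E v w ∨ E u z) ∧
     (E z v ∧ E w u → E z u ∨ E w v))

/-!
Order the vertices by the left endpoint of their inner interval `J`, breaking ties arbitrarily.
Every out-arc condition of a nest ordering then follows from `J ⊆ I` alone, since `J_v` starts
between the starts of `J_u` and `J_w`. For the in-arc conditions, either the outer interval `I_z`
of the last vertex already reaches the relevant `J`, or it starts to the right of it; in the latter
case that `J` ends before the inner intervals that `I_z` does meet, which forces the required arcs.
-/

theorem exists_linearOrder_monotone {V α : Type*} [LinearOrder α] (f : V → α) :
    ∃ _ : LinearOrder V, Monotone f := by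
  let : LinearOrder V := WellOrderingRel.isWellOrder.linearOrder
  have hinj : Function.Injective fun u : V => toLex (f u, u) :=
    fun u v h => congrArg Prod.snd (toLex.injective h)
  exact ⟨LinearOrder.lift' _ hinj, fun u v h => (Prod.Lex.le_iff.mp h).elim le_of_lt (·.1.le)⟩

namespace IsNestRepresentation

variable {V : Type*} {E : V → V → Prop} {aI bI aJ bJ : V → ℝ}
  (hr : IsNestRepresentation E aI bI aJ bJ)
include hr

theorem aI_le_aJ (u : V) : aI u ≤ aJ u :=
  (hr.2.2.1 u ⟨le_rfl, hr.2.1 u⟩).1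

theorem bJ_le_bI (u : V) : bJ u ≤ bI u :=
  (hr.2.2.1 u ⟨hr.2.1 u, le_rfl⟩).2

theorem arc_iff {u v : V} : E u v ↔ aI u ≤ bJ v ∧ aJ v ≤ bI u := by
  rw [hr.2.2.2, Set.Icc_inter_Icc, Set.nonempty_Icc, max_le_iff, le_min_iff, le_min_iff]
  exact ⟨fun h => ⟨h.1.2, h.2.1⟩, fun h => ⟨⟨hr.1 u, h.1⟩, h.2, hr.2.1 v⟩⟩

theorem arc_self (u : V) : E u u :=
  hr.arc_iff.2 ⟨(hr.aI_le_aJ u).trans (hr.2.1 u), (hr.2.1 u).trans (hr.bJ_le_bI u)⟩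

theorem arc_iff_of_aJ_le {u v : V} (h : aJ v ≤ aJ u) : E u v ↔ aI u ≤ bJ v :=
  hr.arc_iff.trans (and_iff_left (h.trans ((hr.2.1 u).trans (hr.bJ_le_bI u))))

theorem symArc_of_le {u v : V} (huv : aJ u ≤ bJ v) (hvu : aJ v ≤ bJ u) : SymArc E u v :=
  ⟨hr.arc_iff.2 ⟨(hr.aI_le_aJ u).trans huv, hvu.trans (hr.bJ_le_bI u)⟩,
    hr.arc_iff.2 ⟨(hr.aI_le_aJ v).trans hvu, huv.trans (hr.bJ_le_bI v)⟩⟩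

theorem arc_of_aJ_between {u v w : V} (huv : aJ u ≤ aJ v) (hvw : aJ v ≤ aJ w) (huw : E u w) :
    E u v :=
  hr.arc_iff.2 ⟨(hr.aI_le_aJ u).trans (huv.trans (hr.2.1 v)), hvw.trans (hr.arc_iff.1 huw).2⟩

theorem isNestOrdering [LinearOrder V] (hmono : Monotone aJ) : IsNestOrdering E (· ≤ ·) := by
  refine ⟨inferInstance, fun u v w z huv hvw hwz => ?_⟩
  replace huv := hmono huv
  replace hvw := hmono hvw
  replace hwz := hmono hwz
  have huw := huv.trans hvw
  have hvz := hvw.trans hwz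
  have huz := huw.trans hwz
  refine ⟨fun ⟨h, _⟩ => .inl (hr.arc_of_aJ_between huv hvw h),
    fun ⟨hzu, hzv⟩ => ?_, fun ⟨h, _⟩ => .inl (hr.arc_of_aJ_between huw hwz h),
    fun ⟨hzu, hwv⟩ => ?_, fun ⟨_, h⟩ => .inl (hr.arc_of_aJ_between hvw hwz h),
    fun ⟨hzv, hwu⟩ => ?_⟩
  · rw [hr.arc_iff_of_aJ_le huz] at hzu
    rw [hr.arc_iff_of_aJ_le hvz] at hzv
    rw [hr.arc_iff_of_aJ_le hwz]
    refine (le_or_gt (aI z) (bJ w)).imp id fun hlt => ?_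
    have := hr.2.1 w
    exact ⟨hr.symArc_of_le (by linarith) (by linarith),
      hr.symArc_of_le (by linarith) (by linarith), hr.symArc_of_le (by linarith) (by linarith)⟩
  · rw [hr.arc_iff_of_aJ_le huz] at hzu
    rw [hr.arc_iff_of_aJ_le hvw] at hwv
    rw [hr.arc_iff_of_aJ_le hvz, hr.arc_iff_of_aJ_le huw]
    exact (le_or_gt (aI z) (bJ v)).imp id fun hlt => hwv.trans (by linarith)
  · rw [hr.arc_iff_of_aJ_le hvz] at hzv
    rw [hr.arc_iff_of_aJ_le huw] at hwu
    rw [hr.arc_iff_of_aJ_le huz, hr.arc_iff_of_aJ_le hvw]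
    exact (le_or_gt (aI z) (bJ u)).imp id fun hlt => hwu.trans (by linarith)

end IsNestRepresentation

theorem interval_nest_implies_reflexive_and_nest_ordering_general
    {V : Type*} (E : V → V → Prop)
    (h : IsIntervalNestDigraph E) :
    (∀ u, E u u) ∧ ∃ le : V → V → Prop, IsNestOrdering E le := by
  obtain ⟨aI, bI, aJ, bJ, hr⟩ := h
  obtain ⟨_, hmono⟩ := exists_linearOrder_monotone aJ
  exact ⟨hr.arc_self, (· ≤ ·), hr.isNestOrdering hmono⟩

/-- If a finite digraph `D = (V,E)` is an interval nest digraph, then `D` is reflexive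
and there exists a nest ordering on `V`. -/
theorem interval_nest_implies_reflexive_and_nest_ordering
    {V : Type*} [Fintype V] (E : V → V → Prop)
    (h : IsIntervalNestDigraph E) :
    (∀ u, E u u) ∧ ∃ le : V → V → Prop, IsNestOrdering E le :=
  interval_nest_implies_reflexive_and_nest_ordering_general E h
end

section
/- A finite digraph D = (V,E) is an interval nest digraph if and only if V admits a linear ordering that avoids the nest forbidden patterns. -/
/-- A linear order `le` on the vertices of a digraph `E` avoids the nest forbidden
patterns if: every vertex has a loop; no `u < v ≤ w < z` realize patterns
(a), (b), (d), (e), (g), (h); and no `u < v < w < z` realize patterns (c), (f). -/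
def AvoidsNestForbiddenPatterns {V : Type*} (E : V → V → Prop)
    (le : V → V → Prop) : Prop :=
  (∀ u, E u u) ∧
  (∀ u v w z : V, (le u v ∧ u ≠ v) → le v w → (le w z ∧ w ≠ z) →
    (¬(E u z ∧ ¬E u v ∧ ¬E w z) ∧            -- (a)
     ¬(E u z ∧ E v w ∧ ¬E u w ∧ ¬E v z) ∧    -- (b)
     ¬(E z u ∧ ¬E v u ∧ ¬E z w) ∧            -- (d)
     ¬(E z u ∧ E w v ∧ ¬E w u ∧ ¬E z v) ∧    -- (e)
     ¬(E u z ∧ ¬E u v ∧ ¬E z w) ∧            -- (g)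
     ¬(E z u ∧ ¬E u v ∧ ¬E z w))) ∧          -- (h)
  (∀ u v w z : V, (le u v ∧ u ≠ v) → (le v w ∧ v ≠ w) → (le w z ∧ w ≠ z) →
    (¬(E u w ∧ E v z ∧ ¬E u z ∧ ¬E v w) ∧    -- (c)
     ¬(E w u ∧ E z v ∧ ¬E z u ∧ ¬E w v)))    -- (f)

namespace IntervalNestAux

open Relation

/-- Symbol type: four endpoint symbols per vertex. `xI v` stands for `aI v` (left end of I),
`xJ v` for `aJ v`, `yJ v` for `bJ v`, `yI v` for `bI v`. -/
inductive NSym (V : Type*) where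
  | xI : V → NSym V
  | xJ : V → NSym V
  | yJ : V → NSym V
  | yI : V → NSym V

variable {V : Type*}

def nsymEquiv : NSym V ≃ ((V ⊕ V) ⊕ (V ⊕ V)) where
  toFun s := match s with
    | .xI a => .inl (.inl a) | .xJ a => .inl (.inr a)
    | .yJ a => .inr (.inl a) | .yI a => .inr (.inr a)
  invFun s := match s with
    | .inl (.inl a) => .xI a | .inl (.inr a) => .xJ a
    | .inr (.inl a) => .yJ a | .inr (.inr a) => .yI a
  left_inv s := by cases s <;> rfl
  right_inv s := by rcases s with (a | a) | (a | a) <;> rfl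

noncomputable instance [Fintype V] : Fintype (NSym V) :=
  Fintype.ofEquiv _ nsymEquiv.symm

section Defs

variable (E : V → V → Prop) (lt : V → V → Prop)

/-- Constraint graph edges between endpoint symbols. An edge `s → t` means the real value
of `s` must be (strictly) below that of `t` in the representation we build. -/
inductive NStep : NSym V → NSym V → Prop where
  | w1 (a : V) : NStep (.xI a) (.xJ a)
  | w3 (a : V) : NStep (.yJ a) (.yI a)
  | ef {a b : V} : lt a b → E a b → NStep (.xJ b) (.yI a)
  | ep {a b : V} : lt a b → E b a → NStep (.xI b) (.yJ a)
  | sf {a b : V} : lt a b → ¬E a b → NStep (.yI a) (.xJ b)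
  | sp {a b : V} : lt a b → ¬E b a → NStep (.yJ a) (.xI b)

/-- Combinatorial consequences of pattern avoidance that we need. -/
structure NCtx : Prop where
  loops : ∀ u, E u u
  ltrans : ∀ {a b c}, lt a b → lt b c → lt a c
  irrefl : ∀ a, ¬ lt a a
  lemU : ∀ {u v c w}, lt u v → ¬E u v → lt c v → E c v → lt c w → ¬E c w → lt u w ∧ ¬E u w
  lemP : ∀ {u v c w}, lt u v → ¬E v u → lt c v → E v c → lt c w → ¬E w c → lt u w ∧ ¬E w u
  jg : ∀ {u m c w}, lt u m → ¬E m u → lt c m → E c m → lt c w → ¬E c w → lt u w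
  jh : ∀ {u v c w}, lt u v → ¬E v u → lt c v → E v c → lt c w → ¬E c w → lt u w

/-- Invariant for paths starting at `yI u` (these stay in the unprimed part). -/
def PhiU (u : V) : NSym V → Prop
  | .xJ w => lt u w ∧ ¬E u w
  | .yI c => c = u ∨ ∃ v, lt u v ∧ ¬E u v ∧ lt c v ∧ E c v
  | _ => False

def PP1 (u c : V) : Prop := ∃ v, lt u v ∧ ¬E v u ∧ lt c v ∧ E v c
def PP2 (u c : V) : Prop := ∃ m, lt u m ∧ ¬E m u ∧ lt c m ∧ E c m
def K0 (u c : V) : Prop := c = u ∨ PP1 E lt u c ∨ PP2 E lt u c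

/-- Invariant for paths starting at `yJ u`. -/
def PhiP (u : V) : NSym V → Prop
  | .yJ c => c = u ∨ PP1 E lt u c
  | .xI w => lt u w ∧ ¬E w u
  | .xJ w => (lt u w ∧ ¬E w u) ∨ ∃ c₀, K0 E lt u c₀ ∧ lt c₀ w ∧ ¬E c₀ w
  | .yI c => ∃ c₀, K0 E lt u c₀ ∧ (c = c₀ ∨ ∃ v, lt c₀ v ∧ ¬E c₀ v ∧ lt c v ∧ E c v)

/-- Unprimed symbols. -/
def IsU : NSym V → Prop
  | .xJ _ => True
  | .yI _ => True
  | _ => False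

end Defs

section Lemmas

variable {E : V → V → Prop} {lt : V → V → Prop}

lemma phiU (hc : NCtx E lt) {u : V} {s : NSym V}
    (h : ReflTransGen (NStep E lt) (.yI u) s) : PhiU E lt u s := by
  induction h with
  | refl => exact Or.inl rfl
  | tail hab hbc ih =>
    cases hbc with
    | w1 a => exact (ih : PhiU E lt u (.xI a)).elim
    | w3 a => exact (ih : PhiU E lt u (.yJ a)).elim
    | ef hab' hE =>
      exact Or.inr ⟨_, (ih : PhiU E lt u (.xJ _)).1, (ih : PhiU E lt u (.xJ _)).2, hab', hE⟩
    | ep hab' hE => exact (ih : PhiU E lt u (.xI _)).elim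
    | sf hab' hE =>
      rcases (ih : PhiU E lt u (.yI _)) with rfl | ⟨v, h1, h2, h3, h4⟩
      · exact ⟨hab', hE⟩
      · exact hc.lemU h1 h2 h3 h4 hab' hE
    | sp hab' hE => exact (ih : PhiU E lt u (.yJ _)).elim

lemma phiP (hc : NCtx E lt) {u : V} {s : NSym V}
    (h : ReflTransGen (NStep E lt) (.yJ u) s) : PhiP E lt u s := by
  induction h with
  | refl => exact Or.inl rfl
  | tail hab hbc ih =>
    cases hbc with
    | w1 a =>
      exact Or.inl (ih : PhiP E lt u (.xI a))
    | w3 a =>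
      refine ⟨a, ?_, Or.inl rfl⟩
      rcases (ih : PhiP E lt u (.yJ a)) with h | h
      · exact Or.inl h
      · exact Or.inr (Or.inl h)
    | @ef a b hab' hE =>
      rcases (ih : PhiP E lt u (.xJ b)) with ⟨h1, h2⟩ | ⟨c₀, hk, h3, h4⟩
      · exact ⟨a, Or.inr (Or.inr ⟨b, h1, h2, hab', hE⟩), Or.inl rfl⟩
      · exact ⟨c₀, hk, Or.inr ⟨b, h3, h4, hab', hE⟩⟩
    | @ep a b hab' hE =>
      exact Or.inr ⟨b, (ih : PhiP E lt u (.xI b)).1, (ih : PhiP E lt u (.xI b)).2, hab', hE⟩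
    | @sf a b hab' hE =>
      obtain ⟨c₀, hk, hrest⟩ := (ih : PhiP E lt u (.yI a))
      refine Or.inr ⟨c₀, hk, ?_⟩
      rcases hrest with rfl | ⟨v, h1, h2, h3, h4⟩
      · exact ⟨hab', hE⟩
      · exact hc.lemU h1 h2 h3 h4 hab' hE
    | @sp a b hab' hE =>
      rcases (ih : PhiP E lt u (.yJ a)) with rfl | ⟨v, h1, h2, h3, h4⟩
      · exact ⟨hab', hE⟩
      · exact hc.lemP h1 h2 h3 h4 hab' hE

lemma phiP_xJ_lt (hc : NCtx E lt) {u w : V} (h : PhiP E lt u (.xJ w)) : lt u w := by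
  rcases h with ⟨h1, _⟩ | ⟨c₀, hk, h3, h4⟩
  · exact h1
  rcases hk with rfl | ⟨v, h1, h2, h5, h6⟩ | ⟨m, h1, h2, h5, h6⟩
  · exact h3
  · exact hc.jh h1 h2 h5 h6 h3 h4
  · exact hc.jg h1 h2 h5 h6 h3 h4

lemma isU_closed {s t : NSym V} (h : ReflTransGen (NStep E lt) s t) (hs : IsU s) : IsU t := by
  induction h with
  | refl => exact hs
  | tail hab hbc ih => cases hbc <;> trivial

lemma noCyc_xJ (hc : NCtx E lt) (w : V) : ¬ TransGen (NStep E lt) (.xJ w) (.xJ w) := by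
  intro h
  obtain ⟨t, h1, h2⟩ := TransGen.head'_iff.1 h
  cases h1 with
  | ef hab hE => exact (phiU hc h2).2 hE

lemma noCyc_xI (hc : NCtx E lt) (w : V) : ¬ TransGen (NStep E lt) (.xI w) (.xI w) := by
  intro h
  obtain ⟨t, h1, h2⟩ := TransGen.head'_iff.1 h
  cases h1 with
  | w1 => exact (isU_closed h2 trivial : IsU (NSym.xI w)).elim
  | ep hab hE => exact (phiP hc h2).2 hE

lemma noCyc_yI (hc : NCtx E lt) (a : V) : ¬ TransGen (NStep E lt) (.yI a) (.yI a) := by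
  intro h
  obtain ⟨t, h1, h2⟩ := TransGen.head'_iff.1 h
  cases h1 with
  | sf hab hE => exact noCyc_xJ hc _ (TransGen.tail' h2 (NStep.sf hab hE))

lemma noCyc_yJ (hc : NCtx E lt) (a : V) : ¬ TransGen (NStep E lt) (.yJ a) (.yJ a) := by
  intro h
  obtain ⟨t, h1, h2⟩ := TransGen.head'_iff.1 h
  cases h1 with
  | w3 => exact (phiU hc h2 : PhiU E lt a (.yJ a)).elim
  | sp hab hE => exact noCyc_xI hc _ (TransGen.tail' h2 (NStep.sp hab hE))

lemma noCyc (hc : NCtx E lt) (s : NSym V) : ¬ TransGen (NStep E lt) s s := by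
  cases s with
  | xI w => exact noCyc_xI hc w
  | xJ w => exact noCyc_xJ hc w
  | yJ w => exact noCyc_yJ hc w
  | yI w => exact noCyc_yI hc w

end Lemmas

section Values

attribute [local instance] Classical.propDecidable

variable [Fintype V] (E : V → V → Prop) (lt : V → V → Prop)

/-- Height: number of strict predecessors in the constraint graph. -/
noncomputable def ht (s : NSym V) : ℕ :=
  (Finset.univ.filter (fun t => TransGen (NStep E lt) t s)).card

/-- Position of a vertex in the order (at least 1). -/
noncomputable def pos (v : V) : ℕ :=
  (Finset.univ.filter (fun x => lt x v)).card + 1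

/-- The set of vertices whose `y`-symbols reach `s`. -/
def ReachY (s : NSym V) (u : V) : Prop :=
  ReflTransGen (NStep E lt) (.yI u) s ∨ ReflTransGen (NStep E lt) (.yJ u) s

noncomputable def nbase (s : NSym V) : ℕ :=
  (Finset.univ.filter (ReachY E lt s)).sup (pos lt)

variable {E lt}

lemma pos_lt_pos (hc : NCtx E lt) {u v : V} (h : lt u v) : pos lt u < pos lt v := by
  have hsub : (Finset.univ.filter (fun x => lt x u)) ⊆ (Finset.univ.filter (fun x => lt x v)) := by
    intro x hx
    rw [Finset.mem_filter] at hx ⊢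
    exact ⟨hx.1, hc.ltrans hx.2 h⟩
  have hss : (Finset.univ.filter (fun x => lt x u)) ⊂ (Finset.univ.filter (fun x => lt x v)) := by
    rw [Finset.ssubset_iff_of_subset hsub]
    exact ⟨u, Finset.mem_filter.2 ⟨Finset.mem_univ _, h⟩,
      fun hu => hc.irrefl u (Finset.mem_filter.1 hu).2⟩
  simpa [pos] using Finset.card_lt_card hss

lemma ht_lt_ht (hc : NCtx E lt) {s t : NSym V} (h : NStep E lt s t) :
    ht E lt s < ht E lt t := by
  apply Finset.card_lt_card
  rw [Finset.ssubset_iff_of_subset]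
  · exact ⟨s, Finset.mem_filter.2 ⟨Finset.mem_univ _, TransGen.single h⟩,
      fun hs => noCyc hc s (Finset.mem_filter.1 hs).2⟩
  · intro r hr
    rw [Finset.mem_filter] at hr ⊢
    exact ⟨hr.1, hr.2.tail h⟩

lemma nbase_mono {s t : NSym V} (h : NStep E lt s t) : nbase E lt s ≤ nbase E lt t := by
  apply Finset.sup_mono
  intro u hu
  rw [Finset.mem_filter] at hu ⊢
  exact ⟨hu.1, hu.2.imp (fun h' => h'.tail h) (fun h' => h'.tail h)⟩

lemma pos_le_nbase_yI (u : V) : pos lt u ≤ nbase E lt (.yI u) :=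
  Finset.le_sup (Finset.mem_filter.2 ⟨Finset.mem_univ _, Or.inl ReflTransGen.refl⟩)

lemma pos_le_nbase_yJ (u : V) : pos lt u ≤ nbase E lt (.yJ u) :=
  Finset.le_sup (Finset.mem_filter.2 ⟨Finset.mem_univ _, Or.inr ReflTransGen.refl⟩)

lemma nbase_xJ_lt (hc : NCtx E lt) (w : V) : nbase E lt (.xJ w) < pos lt w := by
  apply (Finset.sup_lt_iff (by simp [pos] : (⊥ : ℕ) < pos lt w)).2
  intro u hu
  apply pos_lt_pos hc
  rcases (Finset.mem_filter.1 hu).2 with h | h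
  · exact (phiU hc h).1
  · exact phiP_xJ_lt hc (phiP hc h)

lemma nbase_xI_lt (hc : NCtx E lt) (w : V) : nbase E lt (.xI w) < pos lt w := by
  apply (Finset.sup_lt_iff (by simp [pos] : (⊥ : ℕ) < pos lt w)).2
  intro u hu
  apply pos_lt_pos hc
  rcases (Finset.mem_filter.1 hu).2 with h | h
  · exact (phiU hc h : PhiU E lt u (.xI w)).elim
  · exact (phiP hc h : PhiP E lt u (.xI w)).1

variable (E lt)

/-- The real value of a symbol. -/
noncomputable def nval (s : NSym V) : ℝ :=
  (nbase E lt s : ℝ) + (ht E lt s : ℝ) / ((Fintype.card (NSym V) : ℝ) + 1)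

variable {E lt}

lemma nval_lt (hc : NCtx E lt) {s t : NSym V} (h : NStep E lt s t) :
    nval E lt s < nval E lt t := by
  have hD : (0:ℝ) < (Fintype.card (NSym V) : ℝ) + 1 := by positivity
  have h1 : (nbase E lt s : ℝ) ≤ (nbase E lt t : ℝ) := by
    exact_mod_cast nbase_mono h
  have h2 : (ht E lt s : ℝ) < (ht E lt t : ℝ) := by exact_mod_cast ht_lt_ht hc h
  have := div_lt_div_of_pos_right h2 hD
  unfold nval
  linarith

lemma nval_frac_lt_one (s : NSym V) :
    (ht E lt s : ℝ) / ((Fintype.card (NSym V) : ℝ) + 1) < 1 := by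
  have hD : (0:ℝ) < (Fintype.card (NSym V) : ℝ) + 1 := by positivity
  rw [div_lt_one hD]
  have : ht E lt s ≤ Fintype.card (NSym V) := by
    unfold ht
    simpa using Finset.card_filter_le Finset.univ _
  have : (ht E lt s : ℝ) ≤ (Fintype.card (NSym V) : ℝ) := by exact_mod_cast this
  linarith

lemma nval_xJ_lt_pos (hc : NCtx E lt) (w : V) : nval E lt (.xJ w) < (pos lt w : ℝ) := by
  have h1 : (nbase E lt (.xJ w) : ℝ) + 1 ≤ (pos lt w : ℝ) := by
    exact_mod_cast nbase_xJ_lt hc w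
  have h2 := nval_frac_lt_one (E := E) (lt := lt) (s := (.xJ w : NSym V))
  unfold nval
  linarith

lemma nval_xI_lt_pos (hc : NCtx E lt) (w : V) : nval E lt (.xI w) < (pos lt w : ℝ) := by
  have h1 : (nbase E lt (.xI w) : ℝ) + 1 ≤ (pos lt w : ℝ) := by
    exact_mod_cast nbase_xI_lt hc w
  have h2 := nval_frac_lt_one (E := E) (lt := lt) (s := (.xI w : NSym V))
  unfold nval
  linarith

lemma pos_le_nval_yI (u : V) : (pos lt u : ℝ) ≤ nval E lt (.yI u) := by
  have h1 : (pos lt u : ℝ) ≤ (nbase E lt (.yI u) : ℝ) := by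
    exact_mod_cast pos_le_nbase_yI (E := E) u
  have h2 : (0:ℝ) ≤ (ht E lt (.yI u : NSym V) : ℝ) / ((Fintype.card (NSym V) : ℝ) + 1) := by
    positivity
  unfold nval
  linarith

lemma pos_le_nval_yJ (u : V) : (pos lt u : ℝ) ≤ nval E lt (.yJ u) := by
  have h1 : (pos lt u : ℝ) ≤ (nbase E lt (.yJ u) : ℝ) := by
    exact_mod_cast pos_le_nbase_yJ (E := E) u
  have h2 : (0:ℝ) ≤ (ht E lt (.yJ u : NSym V) : ℝ) / ((Fintype.card (NSym V) : ℝ) + 1) := by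
    positivity
  unfold nval
  linarith

end Values

section MkCtx

variable {E le : V → V → Prop}

/-- Build the combinatorial context from pattern avoidance. -/
lemma mkNCtx
    (hrefl : ∀ a, le a a)
    (htrans : ∀ {a b c}, le a b → le b c → le a c)
    (hanti : ∀ {a b}, le a b → le b a → a = b)
    (htot : ∀ a b, le a b ∨ le b a)
    (hloop : ∀ u, E u u)
    (hA2 : ∀ u v w z : V, (le u v ∧ u ≠ v) → le v w → (le w z ∧ w ≠ z) →
      (¬(E u z ∧ ¬E u v ∧ ¬E w z) ∧
       ¬(E u z ∧ E v w ∧ ¬E u w ∧ ¬E v z) ∧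
       ¬(E z u ∧ ¬E v u ∧ ¬E z w) ∧
       ¬(E z u ∧ E w v ∧ ¬E w u ∧ ¬E z v) ∧
       ¬(E u z ∧ ¬E u v ∧ ¬E z w) ∧
       ¬(E z u ∧ ¬E u v ∧ ¬E z w)))
    (hA3 : ∀ u v w z : V, (le u v ∧ u ≠ v) → (le v w ∧ v ≠ w) → (le w z ∧ w ≠ z) →
      (¬(E u w ∧ E v z ∧ ¬E u z ∧ ¬E v w) ∧
       ¬(E w u ∧ E z v ∧ ¬E z u ∧ ¬E w v))) :
    NCtx E (fun a b => le a b ∧ a ≠ b) := by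
  set lt : V → V → Prop := fun a b => le a b ∧ a ≠ b with hltdef
  have ltrans : ∀ {a b c}, lt a b → lt b c → lt a c := by
    rintro a b c ⟨h1, h2⟩ ⟨h3, h4⟩
    refine ⟨htrans h1 h3, fun hac => ?_⟩
    subst hac
    exact h2 (hanti h1 h3)
  have irrefl : ∀ a, ¬ lt a a := fun a h => h.2 rfl
  have trich : ∀ a b, lt a b ∨ a = b ∨ lt b a := by
    intro a b
    by_cases hab : a = b
    · exact Or.inr (Or.inl hab)
    rcases htot a b with h | h
    · exact Or.inl ⟨h, hab⟩
    · exact Or.inr (Or.inr ⟨h, Ne.symm hab⟩)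
  have nlt : ∀ {a b : V}, ¬ lt a b → le b a := by
    intro a b h
    rcases trich a b with h' | rfl | h'
    · exact absurd h' h
    · exact hrefl a
    · exact h'.1
  have lemU : ∀ {u v c w}, lt u v → ¬E u v → lt c v → E c v → lt c w → ¬E c w →
      lt u w ∧ ¬E u w := by
    intro u v c w h1 h2 h3 h4 h5 h6
    have huw : lt u w := by
      by_contra hco
      exact (hA2 c w u v h5 (nlt hco) h1).1 ⟨h4, h6, h2⟩
    refine ⟨huw, fun hEuw => ?_⟩
    rcases trich u c with huc | rfl | hcu
    · rcases trich w v with hwv | rfl | hvw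
      · exact (hA3 u c w v huc h5 hwv).1 ⟨hEuw, h4, h2, h6⟩
      · exact h6 h4
      · exact (hA2 u c v w huc h3.1 hvw).2.1 ⟨hEuw, h4, h2, h6⟩
    · exact h2 h4
    · rcases trich w v with hwv | rfl | hvw
      · exact (hA2 c u w v hcu huw.1 hwv).2.1 ⟨h4, hEuw, h6, h2⟩
      · exact h6 h4
      · exact (hA3 c u v w hcu h1 hvw).1 ⟨h4, hEuw, h6, h2⟩
  have lemP : ∀ {u v c w}, lt u v → ¬E v u → lt c v → E v c → lt c w → ¬E w c →
      lt u w ∧ ¬E w u := by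
    intro u v c w h1 h2 h3 h4 h5 h6
    have huw : lt u w := by
      by_contra hco
      exact (hA2 c w u v h5 (nlt hco) h1).2.2.1 ⟨h4, h6, h2⟩
    refine ⟨huw, fun hEwu => ?_⟩
    rcases trich u c with huc | rfl | hcu
    · rcases trich w v with hwv | rfl | hvw
      · exact (hA3 u c w v huc h5 hwv).2 ⟨hEwu, h4, h2, h6⟩
      · exact h6 h4
      · exact (hA2 u c v w huc h3.1 hvw).2.2.2.1 ⟨hEwu, h4, h2, h6⟩
    · exact h2 h4
    · rcases trich w v with hwv | rfl | hvw
      · exact (hA2 c u w v hcu huw.1 hwv).2.2.2.1 ⟨h4, hEwu, h6, h2⟩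
      · exact h6 h4
      · exact (hA3 c u v w hcu h1 hvw).2 ⟨h4, hEwu, h6, h2⟩
  have jg : ∀ {u m c w}, lt u m → ¬E m u → lt c m → E c m → lt c w → ¬E c w → lt u w := by
    intro u m c w h1 h2 h3 h4 h5 h6
    by_contra hco
    exact (hA2 c w u m h5 (nlt hco) h1).2.2.2.2.1 ⟨h4, h6, h2⟩
  have jh : ∀ {u v c w}, lt u v → ¬E v u → lt c v → E v c → lt c w → ¬E c w → lt u w := by
    intro u v c w h1 h2 h3 h4 h5 h6
    by_contra hco
    exact (hA2 c w u v h5 (nlt hco) h1).2.2.2.2.2 ⟨h4, h6, h2⟩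
  exact ⟨hloop, ltrans, irrefl, lemU, lemP, jg, jh⟩

end MkCtx

end IntervalNestAux

/-- A finite digraph `D = (V,E)` is an interval nest digraph if and only if `V` admits
a linear ordering that avoids the nest forbidden patterns. -/
theorem interval_nest_iff_pattern_avoiding_ordering
    {V : Type*} [Fintype V] (E : V → V → Prop) :
    IsIntervalNestDigraph E ↔
      ∃ le : V → V → Prop, IsLinearOrder V le ∧ AvoidsNestForbiddenPatterns E le := by
  classical
  constructor
  · -- forward: representation ⇒ pattern-avoiding order
    rintro ⟨aI, bI, aJ, bJ, h1, h2, h3, h4⟩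
    set ι : V → ℕ := fun v => ((Fintype.equivFin V) v : ℕ) with hι
    set r : V → V → Prop := fun u v => aJ u < aJ v ∨ (aJ u = aJ v ∧ ι u ≤ ι v) with hrdef
    have hmono : ∀ {u v}, r u v → aJ u ≤ aJ v := by
      rintro u v (h | ⟨h, -⟩)
      · exact h.le
      · exact h.le
    have hrrefl : ∀ a, r a a := fun a => Or.inr ⟨rfl, le_refl _⟩
    have hrtrans : ∀ {a b c}, r a b → r b c → r a c := by
      rintro a b c (h | ⟨h, hi⟩) (h' | ⟨h', hi'⟩)
      · exact Or.inl (h.trans h')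
      · exact Or.inl (h'.symm ▸ h)
      · exact Or.inl (h ▸ h')
      · exact Or.inr ⟨h.trans h', hi.trans hi'⟩
    have hranti : ∀ {a b}, r a b → r b a → a = b := by
      rintro a b (h | ⟨h, hi⟩) (h' | ⟨h', hi'⟩)
      · exact absurd h' h.asymm
      · exact absurd h (h'.symm ▸ lt_irrefl _)
      · exact absurd h' (h ▸ lt_irrefl _)
      · have : ι a = ι b := le_antisymm hi hi'
        have : (Fintype.equivFin V) a = (Fintype.equivFin V) b := Fin.ext this
        exact (Fintype.equivFin V).injective this
    have hrtot : ∀ a b, r a b ∨ r b a := by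
      intro a b
      rcases lt_trichotomy (aJ a) (aJ b) with h | h | h
      · exact Or.inl (Or.inl h)
      · rcases le_total (ι a) (ι b) with hi | hi
        · exact Or.inl (Or.inr ⟨h, hi⟩)
        · exact Or.inr (Or.inr ⟨h.symm, hi⟩)
      · exact Or.inr (Or.inl h)
    have hlin : IsLinearOrder V r :=
      { refl := hrrefl
        trans := fun _ _ _ => hrtrans
        antisymm := fun _ _ => hranti
        total := hrtot }
    have haIJ : ∀ u, aI u ≤ aJ u := fun u => (h3 u ⟨le_refl _, h2 u⟩).1
    have hbJI : ∀ u, bJ u ≤ bI u := fun u => (h3 u ⟨h2 u, le_refl _⟩).2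
    have hEiff : ∀ u v, E u v ↔ (aI u ≤ bJ v ∧ aJ v ≤ bI u) := by
      intro u v
      rw [h4 u v, Set.Icc_inter_Icc, Set.nonempty_Icc]
      constructor
      · intro h
        exact ⟨le_trans le_sup_left (h.trans inf_le_right),
               le_trans le_sup_right (h.trans inf_le_left)⟩
      · rintro ⟨ha, hb⟩
        exact sup_le (le_inf (h1 u) ha) (le_inf hb (h2 v))
    have d1 : ∀ {u v}, r u v → ¬E u v → bI u < aJ v := by
      intro u v hruv hne
      by_contra hco
      exact hne ((hEiff u v).2
        ⟨le_trans (haIJ u) (le_trans (hmono hruv) (h2 v)), not_lt.1 hco⟩)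
    have d2 : ∀ {u v}, r u v → ¬E v u → bJ u < aI v := by
      intro u v hruv hne
      by_contra hco
      exact hne ((hEiff v u).2
        ⟨not_lt.1 hco, le_trans (hmono hruv) (le_trans (h2 v) (hbJI v))⟩)
    refine ⟨r, hlin, ?_, ?_, ?_⟩
    · intro u
      exact (hEiff u u).2 ⟨(haIJ u).trans (h2 u), (h2 u).trans (hbJI u)⟩
    · rintro u v w z ⟨huv, -⟩ hvw ⟨hwz, -⟩
      refine ⟨?_, ?_, ?_, ?_, ?_, ?_⟩
      · rintro ⟨hEuz, hnuv, -⟩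
        have e1 := d1 huv hnuv
        have e2 := ((hEiff u z).1 hEuz).2
        have e3 := hmono (hrtrans hvw hwz)
        linarith
      · rintro ⟨hEuz, -, hnuw, -⟩
        have e1 := d1 (hrtrans huv hvw) hnuw
        have e2 := ((hEiff u z).1 hEuz).2
        have e3 := hmono hwz
        linarith
      · rintro ⟨hEzu, hnvu, hnzw⟩
        have e1 := d2 huv hnvu
        have e2 := d2 hwz hnzw
        have e3 := ((hEiff z u).1 hEzu).1
        have e4 := haIJ v
        have e5 := hmono hvw
        have e6 := h2 w
        linarith
      · rintro ⟨hEzu, hEwv, hnwu, hnzv⟩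
        have e1 := d2 (hrtrans huv hvw) hnwu
        have e2 := d2 (hrtrans hvw hwz) hnzv
        have e3 := ((hEiff z u).1 hEzu).1
        have e4 := ((hEiff w v).1 hEwv).1
        linarith
      · rintro ⟨hEuz, hnuv, -⟩
        have e1 := d1 huv hnuv
        have e2 := ((hEiff u z).1 hEuz).2
        have e3 := hmono (hrtrans hvw hwz)
        linarith
      · rintro ⟨hEzu, hnuv, hnzw⟩
        have e1 := d1 huv hnuv
        have e2 := d2 hwz hnzw
        have e3 := ((hEiff z u).1 hEzu).1
        have e4 := hbJI u
        have e5 := hmono hvw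
        have e6 := h2 w
        linarith
    · rintro u v w z ⟨huv, -⟩ ⟨hvw, -⟩ ⟨hwz, -⟩
      constructor
      · rintro ⟨hEuw, hEvz, -, hnvw⟩
        have e1 := d1 hvw hnvw
        have e2 := ((hEiff v z).1 hEvz).2
        have e3 := hmono hwz
        linarith
      · rintro ⟨hEwu, hEzv, hnzu, hnwv⟩
        have e1 := d2 (hrtrans (hrtrans huv hvw) hwz) hnzu
        have e2 := d2 hvw hnwv
        have e3 := ((hEiff w u).1 hEwu).1
        have e4 := ((hEiff z v).1 hEzv).1
        linarith
  · -- backward: pattern-avoiding order ⇒ representation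
    rintro ⟨le, hlin, hloop, hA2, hA3⟩
    haveI := hlin
    have hrefl : ∀ a, le a a := fun a => Std.Refl.refl a
    have htrans : ∀ {a b c}, le a b → le b c → le a c :=
      fun h1 h2 => IsTrans.trans _ _ _ h1 h2
    have hanti : ∀ {a b}, le a b → le b a → a = b :=
      fun h1 h2 => Std.Antisymm.antisymm _ _ h1 h2
    have htot : ∀ a b, le a b ∨ le b a := fun a b => Std.Total.total a b
    have hc := IntervalNestAux.mkNCtx hrefl htrans hanti htot hloop hA2 hA3
    set lt : V → V → Prop := fun a b => le a b ∧ a ≠ b with hltdef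
    have trich : ∀ a b, lt a b ∨ a = b ∨ lt b a := by
      intro a b
      by_cases hab : a = b
      · exact Or.inr (Or.inl hab)
      rcases htot a b with h | h
      · exact Or.inl ⟨h, hab⟩
      · exact Or.inr (Or.inr ⟨h, Ne.symm hab⟩)
    open IntervalNestAux in
    refine ⟨fun v => nval E lt (.xI v), fun v => nval E lt (.yI v),
            fun v => nval E lt (.xJ v), fun v => nval E lt (.yJ v), ?_, ?_, ?_, ?_⟩
    · intro u
      have g1 := nval_xI_lt_pos hc u
      have g2 := pos_le_nval_yI (E := E) (lt := lt) u
      linarith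
    · intro u
      have g1 := nval_xJ_lt_pos hc u
      have g2 := pos_le_nval_yJ (E := E) (lt := lt) u
      linarith
    · intro u
      apply Set.Icc_subset_Icc
      · exact (nval_lt hc (NStep.w1 u)).le
      · exact (nval_lt hc (NStep.w3 u)).le
    · intro u v
      have hxJyJ : ∀ w, nval E lt (.xJ w) ≤ nval E lt (.yJ w) := by
        intro w
        have g1 := nval_xJ_lt_pos hc w
        have g2 := pos_le_nval_yJ (E := E) (lt := lt) w
        linarith
      have hxIyI : ∀ w, nval E lt (.xI w) ≤ nval E lt (.yI w) := by
        intro w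
        have g1 := nval_xI_lt_pos hc w
        have g2 := pos_le_nval_yI (E := E) (lt := lt) w
        linarith
      rw [Set.Icc_inter_Icc, Set.nonempty_Icc]
      rcases trich u v with hlt | rfl | hlt
      · constructor
        · intro hE
          refine sup_le (le_inf (hxIyI u) ?_) (le_inf ?_ (hxJyJ v))
          · -- aI u ≤ bJ v
            have g1 := nval_xI_lt_pos hc u
            have g2 := pos_le_nval_yJ (E := E) (lt := lt) v
            have g3 : (pos lt u : ℝ) < (pos lt v : ℝ) := by
              exact_mod_cast pos_lt_pos hc hlt
            linarith
          · exact (nval_lt hc (NStep.ef hlt hE)).le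
        · intro hne
          by_contra hnE
          have g1 := nval_lt hc (NStep.sf hlt hnE)
          have g2 : nval E lt (.xJ v) ≤ nval E lt (.yI u) :=
            le_trans le_sup_right (hne.trans inf_le_left)
          linarith
      · refine iff_of_true (hloop u) ?_
        refine sup_le (le_inf (hxIyI u) ?_) (le_inf ?_ (hxJyJ u))
        · exact (nval_lt hc (NStep.w1 u)).le.trans (hxJyJ u)
        · have := (nval_lt hc (NStep.w3 u)).le
          exact (hxJyJ u).trans this
      · constructor
        · intro hE
          refine sup_le (le_inf (hxIyI u) ?_) (le_inf ?_ (hxJyJ v))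
          · exact (nval_lt hc (NStep.ep hlt hE)).le
          · -- aJ v ≤ bI u
            have g1 := nval_xJ_lt_pos hc v
            have g2 := pos_le_nval_yI (E := E) (lt := lt) u
            have g3 : (pos lt v : ℝ) < (pos lt u : ℝ) := by
              exact_mod_cast pos_lt_pos hc hlt
            linarith
        · intro hne
          by_contra hnE
          have g1 := nval_lt hc (NStep.sp hlt hnE)
          have g2 : nval E lt (.xI u) ≤ nval E lt (.yJ v) :=
            le_trans le_sup_left (hne.trans inf_le_right)
          linarith
end

section
/- Let D = (V,E) be a finite digraph and let ≤ be a linear order on V that avoids the nest forbidden patterns. Then D is reflexive and ≤ is a nest ordering on V. -/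
/-- If `D = (V,E)` is a finite digraph and `le` is a linear order on `V` avoiding the
nest forbidden patterns, then `D` is reflexive and `le` is a nest ordering on `V`. -/
theorem pattern_avoiding_is_nest_ordering
    {V : Type*} [Fintype V] (E : V → V → Prop) (le : V → V → Prop)
    (hlin : IsLinearOrder V le)
    (h : AvoidsNestForbiddenPatterns E le) :
    (∀ u, E u u) ∧ IsNestOrdering E le := by
  classical
  obtain ⟨hrefl, hP, hQ⟩ := h
  have hle_refl : ∀ a, le a a := fun a => hlin.toIsPartialOrder.toIsPreorder.toRefl.refl a
  have hle_trans : ∀ {a b c}, le a b → le b c → le a c :=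
    fun hab hbc => hlin.toIsPartialOrder.toIsPreorder.toIsTrans.trans _ _ _ hab hbc
  -- helper lemmas from the patterns
  have pa : ∀ a b c d, le a b → a ≠ b → le b c → le c d → c ≠ d →
      E a d → ¬E a b → E c d := by
    intro a b c d h1 h2 h3 h4 h5 he hn
    by_contra hc
    exact (hP a b c d ⟨h1, h2⟩ h3 ⟨h4, h5⟩).1 ⟨he, hn, hc⟩
  have pg : ∀ a b c d, le a b → a ≠ b → le b c → le c d → c ≠ d →
      E a d → ¬E a b → E d c := by
    intro a b c d h1 h2 h3 h4 h5 he hn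
    by_contra hc
    exact (hP a b c d ⟨h1, h2⟩ h3 ⟨h4, h5⟩).2.2.2.2.1 ⟨he, hn, hc⟩
  have pd : ∀ a b c d, le a b → a ≠ b → le b c → le c d → c ≠ d →
      E d a → ¬E d c → E b a := by
    intro a b c d h1 h2 h3 h4 h5 he hn
    by_contra hc
    exact (hP a b c d ⟨h1, h2⟩ h3 ⟨h4, h5⟩).2.2.1 ⟨he, hc, hn⟩
  have ph : ∀ a b c d, le a b → a ≠ b → le b c → le c d → c ≠ d →
      E d a → ¬E d c → E a b := by
    intro a b c d h1 h2 h3 h4 h5 he hn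
    by_contra hc
    exact (hP a b c d ⟨h1, h2⟩ h3 ⟨h4, h5⟩).2.2.2.2.2 ⟨he, hc, hn⟩
  have pb : ∀ a b c d, le a b → a ≠ b → le b c → le c d → c ≠ d →
      E a d → E b c → ¬E a c → E b d := by
    intro a b c d h1 h2 h3 h4 h5 he1 he2 hn
    by_contra hc
    exact (hP a b c d ⟨h1, h2⟩ h3 ⟨h4, h5⟩).2.1 ⟨he1, he2, hn, hc⟩
  have pe : ∀ a b c d, le a b → a ≠ b → le b c → le c d → c ≠ d →
      E d a → E c b → ¬E d b → E c a := by
    intro a b c d h1 h2 h3 h4 h5 he1 he2 hn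
    by_contra hc
    exact (hP a b c d ⟨h1, h2⟩ h3 ⟨h4, h5⟩).2.2.2.1 ⟨he1, he2, hc, hn⟩
  have pc : ∀ a b c d, le a b → a ≠ b → le b c → b ≠ c → le c d → c ≠ d →
      E a c → E b d → ¬E b c → E a d := by
    intro a b c d h1 h2 h3 h3' h4 h5 he1 he2 hn
    by_contra hc
    exact (hQ a b c d ⟨h1, h2⟩ ⟨h3, h3'⟩ ⟨h4, h5⟩).1 ⟨he1, he2, hc, hn⟩
  have pf : ∀ a b c d, le a b → a ≠ b → le b c → b ≠ c → le c d → c ≠ d →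
      E c a → E d b → ¬E c b → E d a := by
    intro a b c d h1 h2 h3 h3' h4 h5 he1 he2 hn
    by_contra hc
    exact (hQ a b c d ⟨h1, h2⟩ ⟨h3, h3'⟩ ⟨h4, h5⟩).2 ⟨he1, he2, hc, hn⟩
  refine ⟨hrefl, hlin, ?_⟩
  intro u v w z huv hvw hwz
  refine ⟨?_, ?_, ?_, ?_, ?_, ?_⟩
  · -- (i) forward
    rintro ⟨huw, huz⟩
    by_cases h1 : u = v
    · subst h1; exact Or.inl (hrefl u)
    by_cases h2 : E u v
    · exact Or.inl h2
    right
    have svw : SymArc E v w := by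
      by_cases h3 : v = w
      · subst h3; exact ⟨hrefl v, hrefl v⟩
      · exact ⟨pa u v v w huv h1 (hle_refl v) hvw h3 huw h2,
               pg u v v w huv h1 (hle_refl v) hvw h3 huw h2⟩
    have svz : SymArc E v z := by
      by_cases h3 : v = z
      · subst h3; exact ⟨hrefl v, hrefl v⟩
      · exact ⟨pa u v v z huv h1 (hle_refl v) (hle_trans hvw hwz) h3 huz h2,
               pg u v v z huv h1 (hle_refl v) (hle_trans hvw hwz) h3 huz h2⟩
    have swz : SymArc E w z := by
      by_cases h3 : w = z
      · subst h3; exact ⟨hrefl w, hrefl w⟩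
      · exact ⟨pa u v w z huv h1 hvw hwz h3 huz h2,
               pg u v w z huv h1 hvw hwz h3 huz h2⟩
    exact ⟨svw, svz, swz⟩
  · -- (i) backward
    rintro ⟨hzu, hzv⟩
    by_cases h3 : E z w
    · exact Or.inl h3
    right
    have hwz' : w ≠ z := fun hq => h3 (by rw [hq]; exact hrefl z)
    have swu : SymArc E w u := by
      by_cases h1 : u = w
      · subst h1; exact ⟨hrefl u, hrefl u⟩
      · exact ⟨pd u w w z (hle_trans huv hvw) h1 (hle_refl w) hwz hwz' hzu h3,
               ph u w w z (hle_trans huv hvw) h1 (hle_refl w) hwz hwz' hzu h3⟩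
    have svu : SymArc E v u := by
      by_cases h1 : u = v
      · subst h1; exact ⟨hrefl u, hrefl u⟩
      · exact ⟨pd u v w z huv h1 hvw hwz hwz' hzu h3,
               ph u v w z huv h1 hvw hwz hwz' hzu h3⟩
    have swv : SymArc E w v := by
      by_cases h1 : v = w
      · subst h1; exact ⟨hrefl v, hrefl v⟩
      · exact ⟨pd v w w z hvw h1 (hle_refl w) hwz hwz' hzv h3,
               ph v w w z hvw h1 (hle_refl w) hwz hwz' hzv h3⟩
    exact ⟨swu, svu, swv⟩
  · -- (ii) forward
    rintro ⟨huz, hEvw⟩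
    by_cases h1 : u = v
    · subst h1; exact Or.inl hEvw
    by_cases h3 : w = z
    · subst h3; exact Or.inr hEvw
    by_cases h2 : E u w
    · exact Or.inl h2
    · exact Or.inr (pb u v w z huv h1 hvw hwz h3 huz hEvw h2)
  · -- (ii) backward
    rintro ⟨hzu, hwv⟩
    by_cases h1 : u = v
    · subst h1; exact Or.inl hzu
    by_cases h3 : w = z
    · subst h3; exact Or.inl hwv
    by_cases h2 : E z v
    · exact Or.inl h2
    · exact Or.inr (pe u v w z huv h1 hvw hwz h3 hzu hwv h2)
  · -- (iii) forward
    rintro ⟨huw, hvz⟩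
    by_cases h1 : u = v
    · subst h1; exact Or.inl huw
    by_cases h2 : v = w
    · subst h2; exact Or.inl (hrefl v)
    by_cases h3 : w = z
    · subst h3; exact Or.inl hvz
    by_cases h4 : E v w
    · exact Or.inl h4
    · exact Or.inr (pc u v w z huv h1 hvw h2 hwz h3 huw hvz h4)
  · -- (iii) backward
    rintro ⟨hzv, hwu⟩
    by_cases h1 : u = v
    · subst h1; exact Or.inl hzv
    by_cases h2 : v = w
    · subst h2; exact Or.inr (hrefl v)
    by_cases h3 : w = z
    · subst h3; exact Or.inr hzv
    by_cases h4 : E w v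
    · exact Or.inr h4
    · exact Or.inl (pf u v w z huv h1 hvw h2 hwz h3 hwu hzv h4)
end

section
/- Every finite interval nest digraph admits a nest representation in which every interval I_u and every interval J_u has positive length (i.e., is nondegenerate). -/
/-!
Thicken every interval by the same `ε > 0` at both ends. Intersecting pairs stay intersecting,
and each of the finitely many disjoint pairs is separated by a positive gap, so for small `ε`
they stay disjoint.
-/

open Filter Topology Set

lemma eventually_sub_le_add_iff (x y : ℝ) :
    ∀ᶠ ε in 𝓝[>] (0 : ℝ), (x - ε ≤ y + ε ↔ x ≤ y) := by
  rcases le_or_gt x y with hxy | hyx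
  · filter_upwards [self_mem_nhdsWithin] with ε (hε : 0 < ε)
    exact iff_of_true (by linarith) hxy
  · have hsmall : ∀ᶠ ε in 𝓝[>] (0 : ℝ), ε < (x - y) / 2 :=
      nhdsWithin_le_nhds (eventually_lt_nhds (by linarith))
    filter_upwards [hsmall] with ε hε
    exact iff_of_false (by linarith) (by linarith)

lemma eventually_Icc_thicken_inter_nonempty_iff (a b c d : ℝ) :
    ∀ᶠ ε in 𝓝[>] (0 : ℝ),
      ((Icc (a - ε) (b + ε) ∩ Icc (c - ε) (d + ε)).Nonempty ↔ (Icc a b ∩ Icc c d).Nonempty) := by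
  simp only [Icc_inter_Icc, nonempty_Icc, max_sub_sub_right, min_add_add_right]
  exact eventually_sub_le_add_iff _ _

theorem IsNestRepresentation.eventually_thicken {V : Type*} [Finite V] {E : V → V → Prop}
    {aI bI aJ bJ : V → ℝ} (hrep : IsNestRepresentation E aI bI aJ bJ) :
    ∀ᶠ ε in 𝓝[>] (0 : ℝ),
      IsNestRepresentation E (fun u => aI u - ε) (fun u => bI u + ε)
        (fun u => aJ u - ε) (fun u => bJ u + ε) ∧
      (∀ u, aI u - ε < bI u + ε) ∧ (∀ u, aJ u - ε < bJ u + ε) := by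
  obtain ⟨hI, hJ, hJI, hE⟩ := hrep
  have harcs : ∀ᶠ ε in 𝓝[>] (0 : ℝ), ∀ u v, E u v ↔
      (Icc (aI u - ε) (bI u + ε) ∩ Icc (aJ v - ε) (bJ v + ε)).Nonempty :=
    eventually_all.2 fun u => eventually_all.2 fun v => by
      filter_upwards [eventually_Icc_thicken_inter_nonempty_iff (aI u) (bI u) (aJ v) (bJ v)]
        with ε hε
      rw [hε, hE]
  filter_upwards [harcs, self_mem_nhdsWithin] with ε harcs (hε : 0 < ε)
  have hI' : ∀ u, aI u - ε < bI u + ε := fun u => by linarith [hI u]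
  have hJ' : ∀ u, aJ u - ε < bJ u + ε := fun u => by linarith [hJ u]
  refine ⟨⟨fun u => (hI' u).le, fun u => (hJ' u).le, fun u => ?_, harcs⟩, hI', hJ'⟩
  obtain ⟨ha, hb⟩ := (Icc_subset_Icc_iff (hJ u)).1 (hJI u)
  exact Icc_subset_Icc (by linarith) (by linarith)

/-- Every finite interval nest digraph admits a nest representation in which every
interval `I_u` and every interval `J_u` has positive length. -/
theorem interval_nest_has_nondegenerate_representation
    {V : Type*} [Fintype V] (E : V → V → Prop)
    (h : IsIntervalNestDigraph E) :
    ∃ aI bI aJ bJ : V → ℝ, IsNestRepresentation E aI bI aJ bJ ∧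
      (∀ u, aI u < bI u) ∧ (∀ u, aJ u < bJ u) := by
  obtain ⟨aI, bI, aJ, bJ, hrep⟩ := h
  obtain ⟨ε, hε⟩ := hrep.eventually_thicken.exists
  exact ⟨_, _, _, _, hε⟩
end

section
/- Let {I_u, J_u}_{u∈V} be a nest representation of a finite digraph D = (V,E) in which every interval has positive length, let p_v ∈ J_v be pairwise distinct points, and order V by u ≤ v iff p_u ≤ p_v. Then for all vertices u ≤ v ≤ w ≤ z, if uw ∈ E and uz ∈ E, then uv ∈ E or all of vw, vz, wz are symmetric arcs (i.e., vw, wv, vz, zv, wz, zw ∈ E). -/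
/-
If `uv ∉ E`, then `I_u` and `J_v` are disjoint, and since `p u ∈ I_u` lies left of `p v ∈ J_v`,
the whole of `I_u` lies left of `J_v`. Every `J_x` that meets `I_u` therefore starts left of
`p v`; for `x = w, z` it also ends right of `p v`, because `p x ≥ p v`. So `p v` is a common
point of `J_v`, `J_w`, `J_z`, and any two of `v, w, z` are joined by symmetric arcs.
-/

namespace IsNestRepresentation

variable {V : Type*} {E : V → V → Prop} {aI bI aJ bJ : V → ℝ}

theorem arc_of_mem_J (hrep : IsNestRepresentation E aI bI aJ bJ) {u v : V} {x : ℝ}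
    (hu : x ∈ Set.Icc (aJ u) (bJ u)) (hv : x ∈ Set.Icc (aJ v) (bJ v)) : E u v :=
  (hrep.2.2.2 u v).2 ⟨x, hrep.2.2.1 u hu, hv⟩

theorem symArc_of_mem_J (hrep : IsNestRepresentation E aI bI aJ bJ) {u v : V} {x : ℝ}
    (hu : x ∈ Set.Icc (aJ u) (bJ u)) (hv : x ∈ Set.Icc (aJ v) (bJ v)) : SymArc E u v :=
  ⟨hrep.arc_of_mem_J hu hv, hrep.arc_of_mem_J hv hu⟩

theorem aJ_le_bI_of_arc (hrep : IsNestRepresentation E aI bI aJ bJ) {u v : V} (huv : E u v) :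
    aJ v ≤ bI u := by
  obtain ⟨x, hxI, hxJ⟩ := (hrep.2.2.2 u v).1 huv
  exact hxJ.1.trans hxI.2

theorem bI_lt_aJ_of_not_arc (hrep : IsNestRepresentation E aI bI aJ bJ) {u v : V} {x y : ℝ}
    (hx : x ∈ Set.Icc (aI u) (bI u)) (hy : y ∈ Set.Icc (aJ v) (bJ v)) (hxy : x ≤ y)
    (huv : ¬E u v) : bI u < aJ v := by
  by_contra! h
  refine huv ((hrep.2.2.2 u v).2 ⟨max (aI u) (aJ v), ⟨le_max_left _ _, ?_⟩, le_max_right _ _, ?_⟩)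
  · exact max_le (hrep.1 u) h
  · exact max_le (hx.1.trans (hxy.trans hy.2)) (hrep.2.1 v)

end IsNestRepresentation

theorem nest_point_order_property_i_general
    {V : Type*} (E : V → V → Prop)
    (aI bI aJ bJ : V → ℝ)
    (hrep : IsNestRepresentation E aI bI aJ bJ)
    (p : V → ℝ) (hp : ∀ v, p v ∈ Set.Icc (aJ v) (bJ v)) :
    ∀ u v w z : V, p u ≤ p v → p v ≤ p w → p w ≤ p z →
      E u w → E u z →
      E u v ∨ (SymArc E v w ∧ SymArc E v z ∧ SymArc E w z) := by
  intro u v w z huv hvw hwz huw huz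
  by_cases hEuv : E u v
  · exact Or.inl hEuv
  have hI_left_of_Jv : bI u < aJ v :=
    hrep.bI_lt_aJ_of_not_arc (hrep.2.2.1 u (hp u)) (hp v) huv hEuv
  have hpv_mem_J {x : V} (hux : E u x) (hvx : p v ≤ p x) : p v ∈ Set.Icc (aJ x) (bJ x) :=
    ⟨(hrep.aJ_le_bI_of_arc hux).trans (hI_left_of_Jv.le.trans (hp v).1), hvx.trans (hp x).2⟩
  have hw := hpv_mem_J huw hvw
  have hz := hpv_mem_J huz (hvw.trans hwz)
  exact Or.inr ⟨hrep.symArc_of_mem_J (hp v) hw, hrep.symArc_of_mem_J (hp v) hz,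
    hrep.symArc_of_mem_J hw hz⟩

/-- In a nest representation with positive-length intervals, ordering vertices by
chosen pairwise distinct points `p v ∈ J_v`: if `u ≤ v ≤ w ≤ z`, `uw ∈ E` and
`uz ∈ E`, then `uv ∈ E` or all of `vw`, `vz`, `wz` are symmetric arcs. -/
theorem nest_point_order_property_i
    {V : Type*} [Fintype V] (E : V → V → Prop)
    (aI bI aJ bJ : V → ℝ)
    (hrep : IsNestRepresentation E aI bI aJ bJ)
    (hposI : ∀ u, aI u < bI u) (hposJ : ∀ u, aJ u < bJ u)
    (p : V → ℝ) (hp : ∀ v, p v ∈ Set.Icc (aJ v) (bJ v))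
    (hinj : Function.Injective p) :
    ∀ u v w z : V, p u ≤ p v → p v ≤ p w → p w ≤ p z →
      E u w → E u z →
      E u v ∨ (SymArc E v w ∧ SymArc E v z ∧ SymArc E w z) :=
  nest_point_order_property_i_general E aI bI aJ bJ hrep p hp
end
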